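/- arXiv:1501.00153 — 2 statements merged into one kernel-verified Lean document; each statement's English description precedes it below -/
import Mathlib

section
/- The circuits of a matroid M are exactly the minimal elements (under inclusion) of the family D = {X ⊆ E : there exists a cyclic flat F with X ⊆ F and |X| = ρ(F) + 1}. -/
open Finset

structure FinMatroid (α : Type*) [DecidableEq α] where
  E : Finset α
  rk : Finset α → ℕ
  rk_le_card : ∀ X, X ⊆ E → rk X ≤ X.card
  rk_mono : ∀ X Y, X ⊆ Y → Y ⊆ E → rk X ≤ rk Y
  rk_submod : ∀ X Y, X ⊆ E → Y ⊆ E → rk (X ∪ Y) + rk (X ∩ Y) ≤ rk X + rk Y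

namespace FinMatroid

variable {α : Type*} [DecidableEq α]

/-- Nullity: η(X) = |X| − ρ(X). -/
def eta (M : FinMatroid α) (X : Finset α) : ℕ := X.card - M.rk X

/-- A circuit is a minimal dependent set. -/
def Circuit (M : FinMatroid α) (C : Finset α) : Prop :=
  C ⊆ M.E ∧ M.rk C < C.card ∧ ∀ Y, Y ⊂ C → M.rk Y = Y.card

/-- A cyclic set is a (possibly empty) union of circuits. -/
def Cyclic (M : FinMatroid α) (X : Finset α) : Prop :=
  X ⊆ M.E ∧ ∀ x ∈ X, ∃ C, M.Circuit C ∧ C ⊆ X ∧ x ∈ C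

/-- Closure: cl(X) = {x ∈ E : ρ(X ∪ {x}) = ρ(X)}. -/
def cl (M : FinMatroid α) (X : Finset α) : Finset α :=
  M.E.filter (fun x => M.rk (insert x X) = M.rk X)

/-- A flat is a closure-closed subset of the ground set. -/
def Flat (M : FinMatroid α) (F : Finset α) : Prop :=
  F ⊆ M.E ∧ M.cl F = F

/-- A cyclic flat is a flat that is a union of circuits. -/
def CyclicFlat (M : FinMatroid α) (F : Finset α) : Prop :=
  M.Cyclic F ∧ M.Flat F

/-- Minimum distance d = min {|X| : ρ(E \ X) < ρ(E)}. -/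
noncomputable def dist (M : FinMatroid α) : ℕ :=
  sInf {m | ∃ X, X ⊆ M.E ∧ X.card = m ∧ M.rk (M.E \ X) < M.rk M.E}

/-- S is an (r,δ)-locality set: |S| ≤ r + δ − 1 and
    min {|X| : X ⊆ S, ρ(S \ X) < ρ(S)} ≥ δ. -/
def LocalitySet (M : FinMatroid α) (r δ : ℕ) (S : Finset α) : Prop :=
  S ⊆ M.E ∧ S.card ≤ r + δ - 1 ∧
    ∀ X, X ⊆ S → M.rk (S \ X) < M.rk S → δ ≤ X.card

/-- M has all-symbol (r,δ)-locality. -/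
def HasLocality (M : FinMatroid α) (r δ : ℕ) : Prop :=
  ∀ x ∈ M.E, ∃ S, x ∈ S ∧ M.LocalitySet r δ S

/-- Restriction of M to X ⊆ E. -/
def restrict (M : FinMatroid α) (X : Finset α) (hX : X ⊆ M.E) : FinMatroid α where
  E := X
  rk := M.rk
  rk_le_card := fun Y hY => M.rk_le_card Y (hY.trans hX)
  rk_mono := fun Y Z h hZ => M.rk_mono Y Z h (hZ.trans hX)
  rk_submod := fun Y Z hY hZ => M.rk_submod Y Z (hY.trans hX) (hZ.trans hX)

end FinMatroid


namespace FinMatroid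

variable {α : Type*} [DecidableEq α] (M : FinMatroid α)

lemma rk_empty : M.rk ∅ = 0 :=
  Nat.le_zero.mp ((M.rk_le_card ∅ (Finset.empty_subset _)).trans (by simp))

lemma rk_union_eq {X : Finset α} (hX : X ⊆ M.E) :
    ∀ Y : Finset α, Y ⊆ M.E → (∀ x ∈ Y, M.rk (insert x X) = M.rk X) →
      M.rk (X ∪ Y) = M.rk X := by
  intro Y
  induction Y using Finset.induction_on with
  | empty => intro _ _; simp
  | @insert a s ha ih =>
    intro hsub hins
    have hsE : s ⊆ M.E := (Finset.subset_insert a s).trans hsub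
    have haE : a ∈ M.E := hsub (Finset.mem_insert_self a s)
    have ihs : M.rk (X ∪ s) = M.rk X :=
      ih hsE (fun x hx => hins x (Finset.mem_insert_of_mem hx))
    have hsub2 := M.rk_submod (X ∪ s) (insert a X) (Finset.union_subset hX hsE)
      (Finset.insert_subset haE hX)
    have hU : (X ∪ s) ∪ insert a X = X ∪ insert a s := by
      ext b; simp; tauto
    have hI : X ⊆ (X ∪ s) ∩ insert a X := by
      intro b hb; simp [hb]
    have hIle : M.rk X ≤ M.rk ((X ∪ s) ∩ (insert a X)) :=
      M.rk_mono _ _ hI ((Finset.inter_subset_right).trans (Finset.insert_subset haE hX))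
    have hins_a : M.rk (insert a X) = M.rk X := hins a (Finset.mem_insert_self a s)
    rw [hU] at hsub2
    have hge : M.rk X ≤ M.rk (X ∪ insert a s) :=
      M.rk_mono _ _ Finset.subset_union_left (Finset.union_subset hX hsub)
    omega

lemma subset_cl {X : Finset α} (hX : X ⊆ M.E) : X ⊆ M.cl X := by
  intro x hx
  simp only [cl, Finset.mem_filter]
  exact ⟨hX hx, by rw [Finset.insert_eq_self.mpr hx]⟩

lemma cl_subset_E (X : Finset α) : M.cl X ⊆ M.E := Finset.filter_subset _ _

lemma rk_cl {X : Finset α} (hX : X ⊆ M.E) : M.rk (M.cl X) = M.rk X := by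
  have h := M.rk_union_eq hX (M.cl X) (M.cl_subset_E X)
    (fun x hx => (Finset.mem_filter.mp hx).2)
  rwa [Finset.union_eq_right.mpr (M.subset_cl hX)] at h

lemma cl_flat {X : Finset α} (hX : X ⊆ M.E) : M.Flat (M.cl X) := by
  refine ⟨M.cl_subset_E X, ?_⟩
  apply Finset.Subset.antisymm
  · intro x hx
    replace hx := Finset.mem_filter.mp hx
    apply Finset.mem_filter.mpr
    refine ⟨hx.1, ?_⟩
    have h1 : M.rk (insert x X) ≤ M.rk (insert x (M.cl X)) :=
      M.rk_mono _ _ (Finset.insert_subset_insert _ (M.subset_cl hX))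
        (Finset.insert_subset hx.1 (M.cl_subset_E X))
    have hcl := M.rk_cl hX
    rw [hx.2, hcl] at h1
    have h2 : M.rk X ≤ M.rk (insert x X) :=
      M.rk_mono _ _ (Finset.subset_insert _ _) (Finset.insert_subset hx.1 hX)
    omega
  · exact M.subset_cl (M.cl_subset_E X)

lemma exists_circuit : ∀ n (X : Finset α), X.card ≤ n → X ⊆ M.E → M.rk X < X.card →
    ∃ C, M.Circuit C ∧ C ⊆ X := by
  intro n
  induction n with
  | zero =>
    intro X h hE hdep
    omega
  | succ n ih =>
    intro X hcard hE hdep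
    by_cases h : ∀ Y, Y ⊂ X → M.rk Y = Y.card
    · exact ⟨X, ⟨hE, hdep, h⟩, Finset.Subset.refl X⟩
    · push_neg at h
      obtain ⟨Y, hYX, hYne⟩ := h
      have hYdep : M.rk Y < Y.card :=
        lt_of_le_of_ne (M.rk_le_card Y (hYX.subset.trans hE)) hYne
      obtain ⟨C, hC, hCY⟩ := ih Y (by have := Finset.card_lt_card hYX; omega)
        (hYX.subset.trans hE) hYdep
      exact ⟨C, hC, hCY.trans hYX.subset⟩

lemma circuit_rk {C : Finset α} (hC : M.Circuit C) : C.card = M.rk C + 1 := by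
  obtain ⟨hE, hdep, hmin⟩ := hC
  have hne : C.Nonempty := by
    rcases Finset.eq_empty_or_nonempty C with rfl | h
    · simp at hdep
    · exact h
  obtain ⟨y, hy⟩ := hne
  have h1 : M.rk (C.erase y) = (C.erase y).card := hmin _ (Finset.erase_ssubset hy)
  have h2 : M.rk (C.erase y) ≤ M.rk C := M.rk_mono _ _ (Finset.erase_subset _ _) hE
  have h3 : (C.erase y).card = C.card - 1 := Finset.card_erase_of_mem hy
  have h4 : 1 ≤ C.card := Finset.card_pos.mpr ⟨y, hy⟩
  omega

lemma circuit_mem_D {C : Finset α} (hC : M.Circuit C) :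
    ∃ F, M.CyclicFlat F ∧ C ⊆ F ∧ C.card = M.rk F + 1 := by
  obtain ⟨hE, hdep, hmin⟩ := hC
  have hCirc : M.Circuit C := ⟨hE, hdep, hmin⟩
  refine ⟨M.cl C, ⟨⟨M.cl_subset_E C, ?_⟩, M.cl_flat hE⟩, M.subset_cl hE,
    by rw [M.rk_cl hE]; exact M.circuit_rk hCirc⟩
  intro x hx
  by_cases hxC : x ∈ C
  · exact ⟨C, hCirc, M.subset_cl hE, hxC⟩
  · have hxE : x ∈ M.E := (M.cl_subset_E C) hx
    have hne : C.Nonempty := by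
      rcases Finset.eq_empty_or_nonempty C with rfl | h
      · simp at hdep
      · exact h
    obtain ⟨y, hy⟩ := hne
    have hxB : x ∉ C.erase y := fun h => hxC (Finset.erase_subset _ _ h)
    have hclx : M.rk (insert x C) = M.rk C := (Finset.mem_filter.mp hx).2
    have hrkC : C.card = M.rk C + 1 := M.circuit_rk hCirc
    have hsubE : insert x (C.erase y) ⊆ M.E :=
      Finset.insert_subset hxE ((Finset.erase_subset _ _).trans hE)
    have hdep2 : M.rk (insert x (C.erase y)) < (insert x (C.erase y)).card := by
      have h1 : M.rk (insert x (C.erase y)) ≤ M.rk (insert x C) :=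
        M.rk_mono _ _ (Finset.insert_subset_insert _ (Finset.erase_subset _ _))
          (Finset.insert_subset hxE hE)
      have h2 : (insert x (C.erase y)).card = (C.erase y).card + 1 :=
        Finset.card_insert_of_notMem hxB
      have h3 : (C.erase y).card = C.card - 1 := Finset.card_erase_of_mem hy
      have h4 : 1 ≤ C.card := Finset.card_pos.mpr ⟨y, hy⟩
      omega
    obtain ⟨C', hC', hC'sub⟩ :=
      M.exists_circuit (insert x (C.erase y)).card (insert x (C.erase y)) le_rfl hsubE hdep2
    refine ⟨C', hC', hC'sub.trans ?_, ?_⟩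
    · intro b hb
      rcases Finset.mem_insert.mp hb with rfl | hbB
      · exact hx
      · exact M.subset_cl hE (Finset.erase_subset _ _ hbB)
    · by_contra hxC'
      have hsubB : C' ⊆ C.erase y := fun b hb => by
        rcases Finset.mem_insert.mp (hC'sub hb) with rfl | h
        · exact absurd hb hxC'
        · exact h
      have hss : C' ⊂ C := Finset.ssubset_of_subset_of_ssubset hsubB (Finset.erase_ssubset hy)
      exact absurd (hmin C' hss) (Nat.ne_of_lt hC'.2.1)

lemma D_dep {Y F : Finset α} (hF : M.CyclicFlat F) (hYF : Y ⊆ F)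
    (hcard : Y.card = M.rk F + 1) : Y ⊆ M.E ∧ M.rk Y < Y.card := by
  have hFE : F ⊆ M.E := hF.2.1
  have h := M.rk_mono Y F hYF hFE
  exact ⟨hYF.trans hFE, by omega⟩

end FinMatroid

theorem circuit_iff_minimal_in_D {α : Type*} [DecidableEq α] (M : FinMatroid α)
    (C : Finset α) :
    M.Circuit C ↔
      ((∃ F, M.CyclicFlat F ∧ C ⊆ F ∧ C.card = M.rk F + 1) ∧
        ∀ Y, (∃ F, M.CyclicFlat F ∧ Y ⊆ F ∧ Y.card = M.rk F + 1) → Y ⊆ C → Y = C) := by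
  constructor
  · intro hC
    refine ⟨M.circuit_mem_D hC, ?_⟩
    rintro Y ⟨F, hF, hYF, hcard⟩ hYC
    by_contra hne
    have hss : Y ⊂ C := lt_of_le_of_ne hYC hne
    have heq := hC.2.2 Y hss
    have hdep := (M.D_dep hF hYF hcard).2
    omega
  · rintro ⟨⟨F, hF, hCF, hcard⟩, hmin⟩
    have hd := M.D_dep hF hCF hcard
    obtain ⟨C', hC', hsub⟩ := M.exists_circuit C.card C le_rfl hd.1 hd.2
    have heq := hmin C' (M.circuit_mem_D hC') hsub
    rwa [← heq]
end

section
/- Structure theorem (first part): let M = (ρ, E) be an (n, k, d, r, δ)-matroid with r < k achieving the generalized Singleton bound d = n − k + 1 − (⌈k/r⌉ − 1)(δ − 1). Then the minimal cyclic flat of M is empty, i.e., M has no loops and the intersection of all cyclic flats is ∅. -/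
open Finset

namespace FinMatroid

variable {α : Type*} [DecidableEq α]

lemma rk_empty' (M : FinMatroid α) : M.rk ∅ = 0 :=
  Nat.le_zero.mp (by simpa using M.rk_le_card ∅ (Finset.empty_subset _))

lemma rk_union_le' (M : FinMatroid α) {A B : Finset α} (hA : A ⊆ M.E) (hB : B ⊆ M.E) :
    M.rk (A ∪ B) ≤ M.rk A + M.rk B := by
  have := M.rk_submod A B hA hB
  omega

lemma rk_insert_le' (M : FinMatroid α) {A : Finset α} {x : α} (hA : A ⊆ M.E) (hx : x ∈ M.E) :
    M.rk (insert x A) ≤ M.rk A + 1 := by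
  have h1 : M.rk ({x} ∪ A) ≤ M.rk {x} + M.rk A :=
    M.rk_union_le' (by simpa using hx) hA
  have h2 : M.rk {x} ≤ 1 := by simpa using M.rk_le_card {x} (by simpa using hx)
  rw [← Finset.insert_eq] at h1
  omega

lemma rk_union_eq_self (M : FinMatroid α) {A Y : Finset α} (hA : A ⊆ M.E) (hY : Y ⊆ M.E)
    (h : ∀ x ∈ Y, M.rk (insert x A) = M.rk A) : M.rk (A ∪ Y) = M.rk A := by
  induction Y using Finset.induction with
  | empty => simp
  | @insert a Y ha ih =>
    have haE : a ∈ M.E := hY (Finset.mem_insert_self a Y)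
    have hYE : Y ⊆ M.E := fun z hz => hY (Finset.mem_insert_of_mem hz)
    have hIH : M.rk (A ∪ Y) = M.rk A := ih hYE (fun x hx => h x (Finset.mem_insert_of_mem hx))
    have hsub := M.rk_submod (A ∪ Y) (insert a A)
      (Finset.union_subset hA hYE) (Finset.insert_subset haE hA)
    have hset : (A ∪ Y) ∪ insert a A = A ∪ insert a Y := by
      ext z
      simp only [Finset.mem_union, Finset.mem_insert]
      tauto
    have hint : A ⊆ (A ∪ Y) ∩ insert a A :=
      Finset.subset_inter Finset.subset_union_left (Finset.subset_insert a A)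
    have hint2 : M.rk A ≤ M.rk ((A ∪ Y) ∩ insert a A) :=
      M.rk_mono _ _ hint ((Finset.inter_subset_left).trans (Finset.union_subset hA hYE))
    have hmono : M.rk A ≤ M.rk (A ∪ insert a Y) :=
      M.rk_mono _ _ Finset.subset_union_left (Finset.union_subset hA (fun z hz => hY hz))
    rw [hset] at hsub
    have hx := h a (Finset.mem_insert_self a Y)
    omega

lemma exists_increase (M : FinMatroid α) {A : Finset α} (hA : A ⊆ M.E)
    (h : M.rk A < M.rk M.E) : ∃ x ∈ M.E, M.rk A < M.rk (insert x A) := by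
  by_contra hc
  push_neg at hc
  have : ∀ x ∈ M.E, M.rk (insert x A) = M.rk A := by
    intro x hx
    have := hc x hx
    have h2 : M.rk A ≤ M.rk (insert x A) :=
      M.rk_mono _ _ (Finset.subset_insert x A) (Finset.insert_subset hx hA)
    omega
  have := M.rk_union_eq_self hA (subset_refl _) this
  rw [Finset.union_eq_right.mpr hA] at this
  omega

lemma indep_of_minimal (M : FinMatroid α) : ∀ n (S A : Finset α), S.card ≤ n → S ⊆ M.E → A ⊆ M.E →
    (∀ y ∈ S, M.rk (A ∪ S.erase y) < M.rk (A ∪ S)) → M.rk (A ∪ S) = M.rk A + S.card := by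
  intro n
  induction n with
  | zero =>
    intro S A hcard _ _ _
    have : S = ∅ := Finset.card_eq_zero.mp (Nat.le_zero.mp hcard)
    subst this; simp
  | succ n ih =>
    intro S A hcard hS hA hmin
    rcases Finset.eq_empty_or_nonempty S with rfl | ⟨y, hy⟩
    · simp
    · have hyE : y ∈ M.E := hS hy
      have hS' : S.erase y ⊆ M.E := (Finset.erase_subset y S).trans hS
      have hmin' : ∀ z ∈ S.erase y, M.rk (A ∪ (S.erase y).erase z) < M.rk (A ∪ S.erase y) := by
        intro z hz
        have hzS : z ∈ S := Finset.mem_of_mem_erase hz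
        have hzy : z ≠ y := Finset.ne_of_mem_erase hz
        have hsub := M.rk_submod (A ∪ S.erase y) (A ∪ S.erase z)
          (Finset.union_subset hA hS') (Finset.union_subset hA ((Finset.erase_subset z S).trans hS))
        have hset : (A ∪ S.erase y) ∪ (A ∪ S.erase z) = A ∪ S := by
          ext w
          simp only [Finset.mem_union, Finset.mem_erase]
          constructor
          · rintro ((h | h) | (h | h)) <;> tauto
          · rintro (h | h)
            · tauto
            · by_cases hw : w = y
              · subst hw; right; right; exact ⟨Ne.symm hzy, h⟩
              · left; right; exact ⟨hw, h⟩
        have hint : A ∪ (S.erase y).erase z ⊆ (A ∪ S.erase y) ∩ (A ∪ S.erase z) := by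
          intro w hw
          simp only [Finset.mem_union, Finset.mem_erase, Finset.mem_inter] at hw ⊢
          tauto
        have hint2 : M.rk (A ∪ (S.erase y).erase z) ≤ M.rk ((A ∪ S.erase y) ∩ (A ∪ S.erase z)) :=
          M.rk_mono _ _ hint ((Finset.inter_subset_left).trans (Finset.union_subset hA hS'))
        rw [hset] at hsub
        have h1 := hmin z hzS
        omega
      have hcard' : (S.erase y).card ≤ n := by
        have := Finset.card_erase_of_mem hy
        have hpos : 1 ≤ S.card := Finset.card_pos.mpr ⟨y, hy⟩
        omega
      have hIH := ih (S.erase y) A hcard' hS' hA hmin'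
      have hset : A ∪ S = insert y (A ∪ S.erase y) := by
        rw [← Finset.union_insert, Finset.insert_erase hy]
      have hle : M.rk (A ∪ S) ≤ M.rk (A ∪ S.erase y) + 1 := by
        rw [hset]
        exact M.rk_insert_le' (Finset.union_subset hA hS') hyE
      have hlt := hmin y hy
      have hpos : 1 ≤ S.card := Finset.card_pos.mpr ⟨y, hy⟩
      have := Finset.card_erase_of_mem hy
      omega

lemma exists_min_basis (M : FinMatroid α) : ∀ n (S A : Finset α), S.card ≤ n → S ⊆ M.E → A ⊆ M.E →
    ∃ B, B ⊆ S \ A ∧ M.rk (A ∪ B) = M.rk (A ∪ S) ∧ M.rk (A ∪ B) = M.rk A + B.card := by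
  intro n
  induction n with
  | zero =>
    intro S A hcard _ _
    have : S = ∅ := Finset.card_eq_zero.mp (Nat.le_zero.mp hcard)
    subst this
    exact ⟨∅, by simp, rfl, by simp⟩
  | succ n ih =>
    intro S A hcard hS hA
    by_cases hmin : ∀ y ∈ S, M.rk (A ∪ S.erase y) < M.rk (A ∪ S)
    · refine ⟨S, ?_, rfl, M.indep_of_minimal (n+1) S A hcard hS hA hmin⟩
      intro y hy
      rw [Finset.mem_sdiff]
      refine ⟨hy, fun hyA => ?_⟩
      have : A ∪ S.erase y = A ∪ S := by
        ext w
        simp only [Finset.mem_union, Finset.mem_erase]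
        constructor
        · tauto
        · rintro (h | h)
          · tauto
          · by_cases hw : w = y
            · subst hw; exact Or.inl hyA
            · exact Or.inr ⟨hw, h⟩
      have h2 := hmin y hy
      rw [this] at h2
      exact absurd h2 (lt_irrefl _)
    · push_neg at hmin
      obtain ⟨y, hy, hrk⟩ := hmin
      have hS' : S.erase y ⊆ M.E := (Finset.erase_subset y S).trans hS
      have hle : M.rk (A ∪ S.erase y) ≤ M.rk (A ∪ S) :=
        M.rk_mono _ _ (Finset.union_subset_union_right (Finset.erase_subset y S))
          (Finset.union_subset hA hS)
      have heq : M.rk (A ∪ S.erase y) = M.rk (A ∪ S) := le_antisymm hle hrk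
      have hcard' : (S.erase y).card ≤ n := by
        have := Finset.card_erase_of_mem hy
        have hpos : 1 ≤ S.card := Finset.card_pos.mpr ⟨y, hy⟩
        omega
      obtain ⟨B, hB1, hB2, hB3⟩ := ih (S.erase y) A hcard' hS' hA
      exact ⟨B, hB1.trans (Finset.sdiff_subset_sdiff (Finset.erase_subset y S) (subset_refl _)),
        by rw [hB2, heq], hB3⟩

lemma span_ext (M : FinMatroid α) {Z S A : Finset α} (hZS : Z ⊆ S) (hS : S ⊆ M.E)
    (hA : A ⊆ M.E) (h : M.rk Z = M.rk S) : M.rk (A ∪ Z) = M.rk (A ∪ S) := by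
  have hsub := M.rk_submod (A ∪ Z) S (Finset.union_subset hA (hZS.trans hS)) hS
  have hset : (A ∪ Z) ∪ S = A ∪ S := by
    ext w; simp only [Finset.mem_union]
    constructor
    · rintro ((h|h)|h) <;> [tauto; exact Or.inr (hZS h); tauto]
    · tauto
  have hint : Z ⊆ (A ∪ Z) ∩ S := Finset.subset_inter Finset.subset_union_right hZS
  have hint2 : M.rk Z ≤ M.rk ((A ∪ Z) ∩ S) :=
    M.rk_mono _ _ hint ((Finset.inter_subset_right).trans hS)
  have hle : M.rk (A ∪ Z) ≤ M.rk (A ∪ S) :=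
    M.rk_mono _ _ (Finset.union_subset_union_right hZS) (Finset.union_subset hA hS)
  rw [hset] at hsub
  omega

lemma locality_step (M : FinMatroid α) {r δ : ℕ} {S A : Finset α} (hδ : 2 ≤ δ)
    (hS : M.LocalitySet r δ S) (hA : A ⊆ M.E) (hinc : M.rk A < M.rk (A ∪ S)) :
    (M.rk (A ∪ S) - M.rk A) + (δ - 1) ≤ (S \ A).card ∧ M.rk (A ∪ S) ≤ M.rk A + r := by
  obtain ⟨hSE, hScard, hSloc⟩ := hS
  obtain ⟨B, hBsub, hBspan, hBindep⟩ := M.exists_min_basis S.card S A (le_refl _) hSE hA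
  have hBS : B ⊆ S := hBsub.trans (Finset.sdiff_subset)
  have hBpos : 1 ≤ B.card := by
    rcases Nat.eq_zero_or_pos B.card with h0 | h; swap; · exact h
    exfalso
    have : B = ∅ := Finset.card_eq_zero.mp h0
    subst this
    simp at hBspan
    omega
  set X : Finset α := (S \ A) \ B with hXdef
  have hXcard : δ - 1 ≤ X.card := by
    by_contra hc
    push_neg at hc
    obtain ⟨y, hy⟩ := Finset.card_pos.mp (by omega : 0 < B.card)
    have hyS : y ∈ S := hBS hy
    set X' : Finset α := insert y X with hX'def
    have hX'S : X' ⊆ S := by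
      intro w hw
      rcases Finset.mem_insert.mp hw with rfl | hw
      · exact hyS
      · exact (Finset.sdiff_subset.trans Finset.sdiff_subset) hw
    have hset : A ∪ (S \ X') = A ∪ B.erase y := by
      ext w
      have hwB : w ∈ B → w ∈ S ∧ w ∉ A := fun h => Finset.mem_sdiff.mp (hBsub h)
      simp only [Finset.mem_union, Finset.mem_sdiff, Finset.mem_insert, Finset.mem_erase,
        hX'def, hXdef]
      tauto
    have herase : M.rk (A ∪ B.erase y) < M.rk (A ∪ B) := by
      have h1 : M.rk (A ∪ B.erase y) ≤ M.rk A + (B.erase y).card := by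
        have := M.rk_union_le' hA ((Finset.erase_subset y B).trans (hBS.trans hSE))
        have h2 := M.rk_le_card (B.erase y) ((Finset.erase_subset y B).trans (hBS.trans hSE))
        omega
      have := Finset.card_erase_of_mem hy
      omega
    have hlt : M.rk (S \ X') < M.rk S := by
      have hle : M.rk (S \ X') ≤ M.rk S :=
        M.rk_mono _ _ Finset.sdiff_subset hSE
      rcases lt_or_eq_of_le hle with h | h
      · exact h
      · exfalso
        have := M.span_ext (Finset.sdiff_subset : S \ X' ⊆ S) hSE hA h
        rw [hset] at this
        omega
    have hge := hSloc X' hX'S hlt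
    have : X'.card ≤ X.card + 1 := Finset.card_insert_le y X
    omega
  have hdisj : X.card + B.card = (S \ A).card := by
    have h := Finset.card_sdiff_add_card_eq_card hBsub
    rw [← hXdef] at h
    omega
  have hΔ : M.rk (A ∪ S) - M.rk A = B.card := by omega
  refine ⟨by omega, ?_⟩
  have hSA : (S \ A).card ≤ S.card := Finset.card_le_card Finset.sdiff_subset
  omega

lemma truncation (M : FinMatroid α) : ∀ n (A B : Finset α) (m : ℕ), (B \ A).card ≤ n →
    A ⊆ B → B ⊆ M.E → M.rk A ≤ m → m ≤ M.rk B →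
    ∃ A', A ⊆ A' ∧ A' ⊆ B ∧ M.rk A' = m ∧ A.card + m ≤ A'.card + M.rk A := by
  intro n
  induction n with
  | zero =>
    intro A B m hcard hAB hBE h1 h2
    have hempty : B \ A = ∅ := Finset.card_eq_zero.mp (Nat.le_zero.mp hcard)
    have : A = B := Finset.Subset.antisymm hAB (fun x hx => by
      by_contra hc
      have : x ∈ B \ A := Finset.mem_sdiff.mpr ⟨hx, hc⟩
      rw [hempty] at this
      exact absurd this (Finset.notMem_empty x))
    subst this
    exact ⟨A, subset_refl _, subset_refl _, le_antisymm h1 h2, by omega⟩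
  | succ n ih =>
    intro A B m hcard hAB hBE h1 h2
    rcases eq_or_lt_of_le h1 with heq | hlt
    · exact ⟨A, subset_refl _, hAB, heq, by omega⟩
    · have hne : (B \ A).Nonempty := by
        rw [Finset.sdiff_nonempty]
        intro hBA
        have : A = B := Finset.Subset.antisymm hAB hBA
        subst this
        omega
      obtain ⟨x, hx⟩ := hne
      obtain ⟨hxB, hxA⟩ := Finset.mem_sdiff.mp hx
      have hins : insert x A ⊆ B := Finset.insert_subset hxB hAB
      have hrkins : M.rk (insert x A) ≤ M.rk A + 1 :=
        M.rk_insert_le' (hAB.trans hBE) (hBE hxB)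
      have hrkins2 : M.rk A ≤ M.rk (insert x A) :=
        M.rk_mono _ _ (Finset.subset_insert x A) (hins.trans hBE)
      have hcard' : (B \ insert x A).card ≤ n := by
        have : B \ insert x A = (B \ A).erase x := by
          ext w
          simp only [Finset.mem_sdiff, Finset.mem_insert, Finset.mem_erase, not_or]
          tauto
        rw [this]
        have := Finset.card_erase_of_mem hx
        have : 1 ≤ (B \ A).card := Finset.card_pos.mpr ⟨x, hx⟩
        omega
      obtain ⟨A', hA'1, hA'2, hA'3, hA'4⟩ := ih (insert x A) B m hcard' hins hBE (by omega) h2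
      have hcardins : (insert x A).card = A.card + 1 := Finset.card_insert_of_notMem hxA
      exact ⟨A', (Finset.subset_insert x A).trans hA'1, hA'2, hA'3, by omega⟩

lemma build (M : FinMatroid α) {r δ : ℕ} (hr : 0 < r) (hδ : 2 ≤ δ)
    (hloc : M.HasLocality r δ) :
    ∀ t (A : Finset α), A ⊆ M.E → M.rk A < M.rk M.E → M.rk M.E - M.rk A ≤ t →
    ∃ A', A ⊆ A' ∧ A' ⊆ M.E ∧ M.rk A' = M.rk M.E - 1 ∧
      A.card + (M.rk M.E - 1) + ((M.rk M.E - M.rk A - 1) / r) * (δ - 1) ≤ A'.card + M.rk A := by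
  intro t
  induction t with
  | zero => intro A _ h1 h2; omega
  | succ t ih =>
    intro A hA hlt hmeas
    obtain ⟨x, hxE, hxinc⟩ := M.exists_increase hA hlt
    obtain ⟨S, hxS, hS⟩ := hloc x hxE
    have hSE : S ⊆ M.E := hS.1
    have hAS : A ∪ S ⊆ M.E := Finset.union_subset hA hSE
    have hinc : M.rk A < M.rk (A ∪ S) := by
      have : insert x A ⊆ A ∪ S := by
        intro w hw
        rcases Finset.mem_insert.mp hw with rfl | hw
        · exact Finset.mem_union_right _ hxS
        · exact Finset.mem_union_left _ hw
      have := M.rk_mono _ _ this hAS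
      omega
    obtain ⟨hstep1, hstep2⟩ := M.locality_step hδ hS hA hinc
    have hcardAS : (A ∪ S).card = A.card + (S \ A).card := by
      rw [← Finset.union_sdiff_self_eq_union]
      exact Finset.card_union_of_disjoint (Finset.disjoint_sdiff)
    by_cases hcase : M.rk (A ∪ S) < M.rk M.E
    · obtain ⟨A', h1, h2, h3, h4⟩ := ih (A ∪ S) hAS hcase (by omega)
      refine ⟨A', Finset.subset_union_left.trans h1, h2, h3, ?_⟩
      -- arithmetic
      set k := M.rk M.E
      set ρ0 := M.rk A
      set ρ1 := M.rk (A ∪ S)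
      have hq : (k - ρ0 - 1) / r ≤ (k - ρ1 - 1) / r + 1 := by
        have h5 : k - ρ0 - 1 ≤ (k - ρ1 - 1) + r := by omega
        calc (k - ρ0 - 1) / r ≤ ((k - ρ1 - 1) + r) / r := Nat.div_le_div_right h5
          _ = (k - ρ1 - 1) / r + 1 := Nat.add_div_right _ hr
      have hmul : ((k - ρ0 - 1) / r) * (δ - 1) ≤ ((k - ρ1 - 1) / r) * (δ - 1) + (δ - 1) := by
        calc ((k - ρ0 - 1) / r) * (δ - 1) ≤ ((k - ρ1 - 1) / r + 1) * (δ - 1) :=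
              Nat.mul_le_mul_right _ hq
          _ = ((k - ρ1 - 1) / r) * (δ - 1) + (δ - 1) := by ring
      set p0 := ((k - ρ0 - 1) / r) * (δ - 1)
      set p1 := ((k - ρ1 - 1) / r) * (δ - 1)
      omega
    · push_neg at hcase
      have hk1 : M.rk M.E - 1 ≤ M.rk (A ∪ S) := by omega
      obtain ⟨A', h1, h2, h3, h4⟩ := M.truncation (A ∪ S).card A (A ∪ S) (M.rk M.E - 1)
        (Finset.card_le_card Finset.sdiff_subset) Finset.subset_union_left hAS (by omega) hk1
      refine ⟨A', h1, h2.trans hAS, h3, ?_⟩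
      have hq0 : (M.rk M.E - M.rk A - 1) / r = 0 := Nat.div_eq_of_lt (by omega)
      rw [hq0]
      omega

lemma no_loops (M : FinMatroid α) (r δ : ℕ) (hr : 0 < r) (hrk : r < M.rk M.E) (hδ : 2 ≤ δ)
    (hloc : M.HasLocality r δ)
    (hd : M.dist = M.E.card - M.rk M.E + 1 - ((M.rk M.E + r - 1) / r - 1) * (δ - 1)) :
    ∀ x ∈ M.E, M.rk {x} ≠ 0 := by
  intro x hx h0
  have hk : 1 ≤ M.rk M.E := by omega
  have hA0 : ({x} : Finset α) ⊆ M.E := by simpa using hx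
  obtain ⟨A', h1, h2, h3, h4⟩ := M.build hr hδ hloc (M.rk M.E) {x} hA0 (by omega) (by omega)
  rw [h0, Nat.sub_zero, Finset.card_singleton] at h4
  have hmem : (M.E.card - A'.card) ∈
      {m | ∃ X, X ⊆ M.E ∧ X.card = m ∧ M.rk (M.E \ X) < M.rk M.E} :=
    ⟨M.E \ A', Finset.sdiff_subset, Finset.card_sdiff_of_subset h2, by
      rw [Finset.sdiff_sdiff_eq_self h2, h3]; omega⟩
  have hdist : M.dist ≤ M.E.card - A'.card := Nat.sInf_le hmem
  have hQ : (M.rk M.E + r - 1) / r - 1 = (M.rk M.E - 1) / r := by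
    have he : M.rk M.E + r - 1 = (M.rk M.E - 1) + r := by omega
    rw [he, Nat.add_div_right _ hr, Nat.add_sub_cancel]
  have hcardle : A'.card ≤ M.E.card := Finset.card_le_card h2
  have hQ2 : ((M.rk M.E + r - 1) / r - 1) * (δ - 1) = ((M.rk M.E - 1) / r) * (δ - 1) := by
    rw [hQ]
  generalize hg1 : ((M.rk M.E - 1) / r) * (δ - 1) = Q at h4 hQ2
  generalize hg2 : ((M.rk M.E + r - 1) / r - 1) * (δ - 1) = Q' at hd hQ2
  omega

end FinMatroid

theorem structure_theorem_bottom_empty {α : Type*} [DecidableEq α] (M : FinMatroid α)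
    (r δ : ℕ) (hr : 0 < r) (hrk : r < M.rk M.E) (hδ : 2 ≤ δ)
    (hloc : M.HasLocality r δ)
    (hd : M.dist = M.E.card - M.rk M.E + 1 -
      ((M.rk M.E + r - 1) / r - 1) * (δ - 1)) :
    M.CyclicFlat ∅ ∧ ∀ x ∈ M.E, M.rk {x} ≠ 0 := by 
  have hnl := FinMatroid.no_loops M r δ hr hrk hδ hloc hd
  refine ⟨⟨⟨Finset.empty_subset _, by simp⟩, Finset.empty_subset _, ?_⟩, hnl⟩
  show M.E.filter (fun x => M.rk (insert x ∅) = M.rk ∅) = ∅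
  rw [Finset.filter_eq_empty_iff]
  intro x hx
  rw [M.rk_empty']
  simpa using hnl x hx
end
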